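/- For ξ ∈ ℝ^d set ã(ξ, z) = Σ_{n ∈ ℤ^d} a(z+n) e^{-i⟨ξ, z+n⟩}. For ξ, η ∈ ℝ^d, let T_{ξ,η} be the integral operator on L²(Ω; ℂ) with kernel (ã(η, x−y) − ã(ξ, x−y)) μ(x,y), x, y ∈ Ω. Then T_{ξ,η} is bounded with operator norm ‖T_{ξ,η}‖ ≤ μ₊ 2^d M₁(a) |ξ − η|, where M₁(a) = ∫_{ℝ^d} |x| a(x) dx. (Equivalently, the fiber operators satisfy ‖𝔸(ξ) − 𝔸(η)‖ ≤ μ₊ 2^d M₁(a) |ξ − η|.) -/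

import Mathlib

open MeasureTheory Real
open scoped ENNReal

noncomputable section

abbrev Euc (d : ℕ) := EuclideanSpace ℝ (Fin d)

def intVec {d : ℕ} (m : Fin d → ℤ) : Euc d :=
  (WithLp.equiv 2 (Fin d → ℝ)).symm fun i => (m i : ℝ)

def cube (d : ℕ) : Set (Euc d) := {x | ∀ i, x i ∈ Set.Ico (0 : ℝ) 1}

variable {d : ℕ}

lemma intVec_apply (m : Fin d → ℤ) (i : Fin d) : intVec m i = (m i : ℝ) := rfl

lemma intVec_neg (m : Fin d → ℤ) : intVec (d := d) (-m) = - intVec m := by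
  ext i; simp [intVec_apply]

lemma measurable_euc_apply (i : Fin d) : Measurable (fun x : Euc d => x i) :=
  (EuclideanSpace.proj i : Euc d →L[ℝ] ℝ).measurable

lemma measurableSet_cube : MeasurableSet (cube d) := by
  have : cube d = ⋂ i, (fun x : Euc d => x i) ⁻¹' Set.Ico (0:ℝ) 1 := by
    ext x; simp [cube]
  rw [this]
  exact MeasurableSet.iInter fun i => (measurable_euc_apply i) measurableSet_Ico

lemma cube_uniq (z : Euc d) : ∃! n : Fin d → ℤ, z - intVec n ∈ cube d := by
  refine ⟨fun i => ⌊z i⌋, fun i => ?_, fun m hm => ?_⟩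
  · have h : (z - intVec fun i => ⌊z i⌋) i = z i - (⌊z i⌋ : ℝ) := rfl
    rw [h]
    exact ⟨by simpa using Int.fract_nonneg (z i), by have := Int.fract_lt_one (z i); rw [Int.fract] at this; linarith⟩
  · funext i
    have h : (z - intVec m) i = z i - (m i : ℝ) := rfl
    have := hm i
    rw [h] at this
    have h1 : (m i : ℝ) ≤ z i := by linarith [this.1]
    have h2 : z i < m i + 1 := by
      have := this.2; push_cast; linarith
    exact (Int.floor_eq_iff.mpr ⟨h1, h2⟩).symm

def tile (S : Set (Euc d)) (n : Fin d → ℤ) : Set (Euc d) := {z | z - intVec n ∈ S}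

lemma tile_measurable {S : Set (Euc d)} (hS : MeasurableSet S) (n : Fin d → ℤ) :
    MeasurableSet (tile S n) :=
  (measurable_id.sub_const (intVec n)) hS

lemma tiles_cover {S : Set (Euc d)} (hu : ∀ z : Euc d, ∃! n : Fin d → ℤ, z - intVec n ∈ S) :
    ⋃ n, tile S n = Set.univ := by
  ext z; simp only [Set.mem_iUnion, Set.mem_univ, iff_true]
  exact ⟨(hu z).exists.choose, (hu z).exists.choose_spec⟩

lemma tiles_disj {S : Set (Euc d)} (hu : ∀ z : Euc d, ∃! n : Fin d → ℤ, z - intVec n ∈ S) :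
    Pairwise (Function.onFun Disjoint (tile S)) := by
  intro m n hmn
  rw [Function.onFun, Set.disjoint_left]
  intro z hm hn
  exact hmn ((hu z).unique hm hn)

lemma setLIntegral_shift {S : Set (Euc d)} {f : Euc d → ℝ≥0∞} (hf : Measurable f)
    (v : Euc d) : ∫⁻ z in S, f (z + v) = ∫⁻ z in {z : Euc d | z - v ∈ S}, f z := by
  have hemb := (MeasurableEquiv.addRight v).measurableEmbedding
  have hmp : MeasurePreserving (fun z : Euc d => z + v) volume volume :=
    measurePreserving_add_right volume v
  have hpre : (fun z : Euc d => z + v) ⁻¹' {z : Euc d | z - v ∈ S} = S := by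
    ext z; simp
  calc ∫⁻ z in S, f (z + v) = ∫⁻ z in (fun z : Euc d => z + v) ⁻¹' {z : Euc d | z - v ∈ S}, f (z + v) := by rw [hpre]
    _ = ∫⁻ z in {z : Euc d | z - v ∈ S}, f z := hmp.setLIntegral_comp_preimage_emb hemb f _

lemma lintegral_tiled {S : Set (Euc d)} (hS : MeasurableSet S)
    (hu : ∀ z : Euc d, ∃! n : Fin d → ℤ, z - intVec n ∈ S)
    {f : Euc d → ℝ≥0∞} (hf : Measurable f) :
    ∫⁻ z in S, ∑' n : Fin d → ℤ, f (z + intVec n) = ∫⁻ z, f z := by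
  have hmeas : ∀ n : Fin d → ℤ, AEMeasurable (fun z => f (z + intVec n)) (volume.restrict S) :=
    fun n => (hf.comp (measurable_add_const (intVec n))).aemeasurable
  rw [lintegral_tsum hmeas]
  have h1 : ∀ n : Fin d → ℤ, ∫⁻ z in S, f (z + intVec n) = ∫⁻ z in tile S n, f z :=
    fun n => setLIntegral_shift hf (intVec n)
  simp_rw [h1]
  rw [← lintegral_iUnion (fun n => tile_measurable hS n) (tiles_disj hu),
    tiles_cover hu, Measure.restrict_univ]

lemma uniq_translate (c : Euc d) (z : Euc d) :
    ∃! n : Fin d → ℤ, z - intVec n ∈ {w : Euc d | w + c ∈ cube d} := by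
  obtain ⟨m, hm, hm'⟩ := cube_uniq (z + c)
  refine ⟨m, ?_, fun n hn => hm' n ?_⟩
  · show z - intVec m + c ∈ cube d
    have : z - intVec m + c = z + c - intVec m := by abel
    rw [this]; exact hm
  · show z + c - intVec n ∈ cube d
    have : z + c - intVec n = z - intVec n + c := by abel
    rw [this]; exact hn

lemma uniq_reflect (x : Euc d) (z : Euc d) :
    ∃! n : Fin d → ℤ, z - intVec n ∈ {w : Euc d | x - w ∈ cube d} := by
  obtain ⟨m, hm, hm'⟩ := cube_uniq (x - z)
  refine ⟨-m, ?_, fun n hn => ?_⟩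
  · show x - (z - intVec (-m)) ∈ cube d
    have : x - (z - intVec (-m)) = x - z - intVec m := by
      rw [intVec_neg]; abel
    rw [this]; exact hm
  · have hn' : x - z - intVec (-n) ∈ cube d := by
      have : x - z - intVec (-n) = x - (z - intVec n) := by rw [intVec_neg]; abel
      rw [this]; exact hn
    have := hm' (-n) hn'
    simp [← this]

lemma col_integral {f : Euc d → ℝ≥0∞} (hf : Measurable f) (y : Euc d) :
    ∫⁻ x in cube d, (∑' n : Fin d → ℤ, f (x - y + intVec n)) = ∫⁻ z, f z := by
  set g : Euc d → ℝ≥0∞ := fun z => ∑' n : Fin d → ℤ, f (z + intVec n) with hg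
  have hgm : Measurable g :=
    Measurable.ennreal_tsum fun n => hf.comp (measurable_add_const (intVec n))
  have h1 : ∫⁻ x in cube d, g (x + (-y)) = ∫⁻ x in {z : Euc d | z - (-y) ∈ cube d}, g x :=
    setLIntegral_shift hgm (-y)
  have h2 : ∀ x : Euc d, g (x + (-y)) = ∑' n : Fin d → ℤ, f (x - y + intVec n) := by
    intro x
    have : x + (-y) = x - y := by abel
    rw [hg, this]
  have h3 : {z : Euc d | z - (-y) ∈ cube d} = {w : Euc d | w + y ∈ cube d} := by
    ext w; simp [sub_neg_eq_add]
  calc ∫⁻ x in cube d, (∑' n : Fin d → ℤ, f (x - y + intVec n))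
      = ∫⁻ x in cube d, g (x + (-y)) := by simp_rw [h2]
    _ = ∫⁻ x in {w : Euc d | w + y ∈ cube d}, g x := by rw [h1, h3]
    _ = ∫⁻ z, f z := by
        apply lintegral_tiled _ (uniq_translate y) hf
        exact (measurable_add_const y) measurableSet_cube

lemma row_integral {f : Euc d → ℝ≥0∞} (hf : Measurable f) (x : Euc d) :
    ∫⁻ y in cube d, (∑' n : Fin d → ℤ, f (x - y + intVec n)) = ∫⁻ z, f z := by
  set g : Euc d → ℝ≥0∞ := fun z => ∑' n : Fin d → ℤ, f (z + intVec n) with hg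
  have hgm : Measurable g :=
    Measurable.ennreal_tsum fun n => hf.comp (measurable_add_const (intVec n))
  set S : Set (Euc d) := {w : Euc d | x - w ∈ cube d} with hS
  have hSm : MeasurableSet S := (measurable_const_sub x) measurableSet_cube
  have hemb := (MeasurableEquiv.subLeft x).measurableEmbedding
  have hmp : MeasurePreserving (fun w : Euc d => x - w) volume volume :=
    Measure.measurePreserving_sub_left volume x
  have hpre : (fun w : Euc d => x - w) ⁻¹' S = cube d := by
    ext w; simp [hS, sub_sub_cancel]
  calc ∫⁻ y in cube d, (∑' n : Fin d → ℤ, f (x - y + intVec n))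
      = ∫⁻ y in (fun w : Euc d => x - w) ⁻¹' S, g (x - y) := by rw [hpre]
    _ = ∫⁻ w in S, g w := hmp.setLIntegral_comp_preimage_emb hemb g S
    _ = ∫⁻ z, f z := lintegral_tiled hSm (uniq_reflect x) hf

lemma null_of_periodic {A : Set (Euc d)} (hA : MeasurableSet A)
    (hper : ∀ (z : Euc d) (n : Fin d → ℤ), z + intVec n ∈ A ↔ z ∈ A)
    (h0 : volume (A ∩ cube d) = 0) : volume A = 0 := by
  have hcover : A ⊆ ⋃ n : Fin d → ℤ, (fun z : Euc d => z - intVec n) ⁻¹' (A ∩ cube d) := by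
    intro z hz
    obtain ⟨n, hn, -⟩ := cube_uniq z
    refine Set.mem_iUnion.mpr ⟨n, ?_, hn⟩
    have : z - intVec n + intVec n ∈ A ↔ z - intVec n ∈ A := hper _ n
    simpa using this.mp (by simpa using hz)
  refine le_antisymm (le_trans (measure_mono hcover) ?_) zero_le
  refine le_trans (measure_iUnion_le _) ?_
  have h4 : ∀ n : Fin d → ℤ,
      volume ((fun z : Euc d => z - intVec n) ⁻¹' A ∩ (fun z : Euc d => z - intVec n) ⁻¹' cube d) = 0 := by
    intro n
    rw [← Set.preimage_inter]
    have hmp : MeasurePreserving (fun z : Euc d => z - intVec n) volume volume := by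
      simpa [sub_eq_add_neg] using measurePreserving_add_right volume (-(intVec n))
    rw [hmp.measure_preimage (hA.inter measurableSet_cube).nullMeasurableSet]
    exact h0
  simp [h4]

lemma norm_cexp_sub_cexp (s t : ℝ) :
    ‖Complex.exp (-Complex.I * s) - Complex.exp (-Complex.I * t)‖ ≤ |s - t| := by
  set f : ℝ → ℂ := fun u => Complex.exp (-Complex.I * u) with hf
  set f' : ℝ → ℂ := fun u => Complex.exp (-Complex.I * u) * (-Complex.I) with hf'
  have hderiv : ∀ u : ℝ, HasDerivAt f (f' u) u := by
    intro u
    have h1 : HasDerivAt (fun u : ℝ => ((u : ℂ))) 1 u := Complex.ofRealCLM.hasDerivAt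
    have h2 : HasDerivAt (fun u : ℝ => -Complex.I * u) (-Complex.I) u := by
      simpa using h1.const_mul (-Complex.I)
    simpa [hf, hf'] using h2.cexp
  have hbound : ∀ u : ℝ, ‖f' u‖ ≤ 1 := by
    intro u
    rw [hf']
    have : ‖Complex.exp (-Complex.I * u)‖ = 1 := by
      rw [Complex.norm_exp]
      simp
    rw [norm_mul, this]
    simp
  have := Convex.norm_image_sub_le_of_norm_hasDerivWithin_le
    (fun u (_ : u ∈ (Set.univ : Set ℝ)) => (hderiv u).hasDerivWithinAt)
    (fun u _ => hbound u) convex_univ (Set.mem_univ t) (Set.mem_univ s)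
  simpa [hf, Real.norm_eq_abs] using this


def atil {d : ℕ} (a : Euc d → ℝ) (ξ z : Euc d) : ℂ :=
  ∑' n : Fin d → ℤ, ((a (z + intVec n) : ℝ) : ℂ) *
    Complex.exp (-Complex.I * ((@inner ℝ _ _ ξ (z + intVec n) : ℝ) : ℂ))
lemma atil_diff_bound (a : Euc d → ℝ) (ξ η z : Euc d)
    (hnn : ∀ n : Fin d → ℤ, 0 ≤ a (z + intVec n))
    (hsum : Summable fun n : Fin d → ℤ => a (z + intVec n))
    (hsum2 : Summable fun n : Fin d → ℤ => ‖z + intVec n‖ * a (z + intVec n)) :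
    ‖atil a η z - atil a ξ z‖ ≤
      ‖ξ - η‖ * ∑' n : Fin d → ℤ, ‖z + intVec n‖ * a (z + intVec n) := by
  set w : (Fin d → ℤ) → Euc d := fun n => z + intVec n with hw
  set c : Euc d → (Fin d → ℤ) → ℂ := fun ζ n =>
    ((a (w n) : ℝ) : ℂ) * Complex.exp (-Complex.I * ((@inner ℝ _ _ ζ (w n) : ℝ) : ℂ)) with hc
  have hnorm : ∀ ζ n, ‖c ζ n‖ = a (w n) := by
    intro ζ n
    rw [hc]
    simp only [norm_mul, Complex.norm_real]
    have : ‖Complex.exp (-Complex.I * ((@inner ℝ _ _ ζ (w n) : ℝ) : ℂ))‖ = 1 := by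
      rw [Complex.norm_exp]; simp
    rw [this, mul_one, Real.norm_eq_abs, abs_of_nonneg (hnn n)]
  have hsummc : ∀ ζ : Euc d, Summable (c ζ) := by
    intro ζ
    apply Summable.of_norm
    simpa only [hnorm] using hsum
  -- bound each difference term
  have hterm : ∀ n, ‖c η n - c ξ n‖ ≤ ‖ξ - η‖ * (‖w n‖ * a (w n)) := by
    intro n
    have : c η n - c ξ n = ((a (w n) : ℝ) : ℂ) *
        (Complex.exp (-Complex.I * ((@inner ℝ _ _ η (w n) : ℝ) : ℂ)) -
         Complex.exp (-Complex.I * ((@inner ℝ _ _ ξ (w n) : ℝ) : ℂ))) := by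
      rw [hc]; ring
    rw [this, norm_mul, Complex.norm_real, Real.norm_eq_abs, abs_of_nonneg (hnn n)]
    have h1 : ‖Complex.exp (-Complex.I * ((@inner ℝ _ _ η (w n) : ℝ) : ℂ)) -
        Complex.exp (-Complex.I * ((@inner ℝ _ _ ξ (w n) : ℝ) : ℂ))‖ ≤
        |(@inner ℝ _ _ η (w n) : ℝ) - (@inner ℝ _ _ ξ (w n) : ℝ)| := norm_cexp_sub_cexp _ _
    have h2 : |(@inner ℝ _ _ η (w n) : ℝ) - (@inner ℝ _ _ ξ (w n) : ℝ)| ≤ ‖ξ - η‖ * ‖w n‖ := by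
      have : (@inner ℝ _ _ η (w n) : ℝ) - (@inner ℝ _ _ ξ (w n) : ℝ)
          = (@inner ℝ _ _ (η - ξ) (w n) : ℝ) := by rw [inner_sub_left]
      rw [this]
      calc |(@inner ℝ _ _ (η - ξ) (w n) : ℝ)| ≤ ‖η - ξ‖ * ‖w n‖ := abs_real_inner_le_norm _ _
        _ = ‖ξ - η‖ * ‖w n‖ := by rw [norm_sub_rev]
    calc a (w n) * ‖_ - _‖ ≤ a (w n) * (‖ξ - η‖ * ‖w n‖) := by
          exact mul_le_mul_of_nonneg_left (h1.trans h2) (hnn n)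
      _ = ‖ξ - η‖ * (‖w n‖ * a (w n)) := by ring
  have hsumnorm : Summable fun n => ‖c η n - c ξ n‖ :=
    Summable.of_nonneg_of_le (fun n => norm_nonneg _) hterm (hsum2.mul_left _)
  have hdiff : atil a η z - atil a ξ z = ∑' n, (c η n - c ξ n) := by
    rw [atil, atil, ← Summable.tsum_sub (hsummc η) (hsummc ξ)]
  rw [hdiff]
  calc ‖∑' n, (c η n - c ξ n)‖ ≤ ∑' n, ‖c η n - c ξ n‖ := norm_tsum_le_tsum_norm hsumnorm
    _ ≤ ∑' n, ‖ξ - η‖ * (‖w n‖ * a (w n)) := Summable.tsum_le_tsum hterm hsumnorm (hsum2.mul_left _)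
    _ = ‖ξ - η‖ * ∑' n, ‖w n‖ * a (w n) := tsum_mul_left

lemma schur_bound {α : Type*} [MeasurableSpace α] {μ : Measure α} [SFinite μ]
    (K : α → α → ℂ) (W : α → α → ℝ≥0∞) (M : ℝ≥0∞)
    (hW : Measurable (Function.uncurry W)) (hM : M ≠ ∞)
    (hKW : ∀ᵐ p ∂(μ.prod μ), (‖K p.1 p.2‖₊ : ℝ≥0∞) ≤ W p.1 p.2)
    (hrow : ∀ x, ∫⁻ y, W x y ∂μ = M)
    (hcol : ∀ y, ∫⁻ x, W x y ∂μ = M)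
    (T : Lp ℂ 2 μ →L[ℂ] Lp ℂ 2 μ)
    (hT : ∀ u : Lp ℂ 2 μ, ∀ᵐ x ∂μ, T u x = ∫ y, K x y * u y ∂μ) :
    ‖T‖ ≤ M.toReal := by
  refine ContinuousLinearMap.opNorm_le_bound T ENNReal.toReal_nonneg fun u => ?_
  have hU : AEStronglyMeasurable (u : α → ℂ) μ := Lp.aestronglyMeasurable u
  set NU : α → ℝ≥0∞ := fun y => (‖(u : α → ℂ) y‖₊ : ℝ≥0∞) with hNU
  have hUm : AEMeasurable NU μ := hU.enorm
  have hWx : ∀ x, Measurable (W x) := fun x => hW.comp measurable_prodMk_left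
  -- step 1 : pointwise bound by the lintegral of W * NU
  have step1 : ∀ᵐ x ∂μ, (‖(T u : α → ℂ) x‖₊ : ℝ≥0∞) ≤ ∫⁻ y, W x y * NU y ∂μ := by
    filter_upwards [hT u, Measure.ae_ae_of_ae_prod hKW] with x hx hKx
    rw [hx]
    calc (‖∫ y, K x y * (u : α → ℂ) y ∂μ‖₊ : ℝ≥0∞)
        ≤ ∫⁻ y, ‖K x y * (u : α → ℂ) y‖₊ ∂μ := enorm_integral_le_lintegral_enorm _
      _ ≤ ∫⁻ y, W x y * NU y ∂μ := by
          refine lintegral_mono_ae (hKx.mono fun y hy => ?_)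
          rw [nnnorm_mul, ENNReal.coe_mul]
          exact mul_le_mul_left hy _
  -- step 2 : Cauchy-Schwarz
  have conj : (2:ℝ).HolderConjugate 2 := Real.HolderConjugate.two_two
  have step2 : ∀ x, ∫⁻ y, W x y * NU y ∂μ ≤
      M ^ (1/2 : ℝ) * (∫⁻ y, W x y * NU y ^ (2:ℝ) ∂μ) ^ (1/2 : ℝ) := by
    intro x
    have hf : AEMeasurable (fun y => W x y ^ (1/2 : ℝ)) μ :=
      ((hWx x).pow measurable_const).aemeasurable
    have hg : AEMeasurable (fun y => W x y ^ (1/2 : ℝ) * NU y) μ := hf.mul hUm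
    have key := ENNReal.lintegral_mul_le_Lp_mul_Lq μ conj hf hg
    have heq1 : ∀ y, W x y ^ (1/2:ℝ) * (W x y ^ (1/2:ℝ) * NU y) = W x y * NU y := by
      intro y
      rw [← mul_assoc, ← ENNReal.rpow_add_of_nonneg _ _ (by norm_num) (by norm_num)]
      norm_num
    have heq2 : ∀ y, (W x y ^ (1/2:ℝ)) ^ (2:ℝ) = W x y := by
      intro y
      rw [← ENNReal.rpow_mul]
      norm_num
    have heq3 : ∀ y, (W x y ^ (1/2:ℝ) * NU y) ^ (2:ℝ) = W x y * NU y ^ (2:ℝ) := by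
      intro y
      rw [ENNReal.mul_rpow_of_nonneg _ _ (by norm_num : (0:ℝ) ≤ 2), heq2]
    simp only [Pi.mul_apply, heq1, heq2, heq3] at key
    rw [hrow x] at key
    exact key
  -- step 3 : integrate the square
  have step3 : ∫⁻ x, (‖(T u : α → ℂ) x‖₊ : ℝ≥0∞) ^ (2:ℝ) ∂μ ≤
      M ^ (2:ℝ) * ∫⁻ y, NU y ^ (2:ℝ) ∂μ := by
    have hsq : ∀ᵐ x ∂μ, (‖(T u : α → ℂ) x‖₊ : ℝ≥0∞) ^ (2:ℝ) ≤
        M * ∫⁻ y, W x y * NU y ^ (2:ℝ) ∂μ := by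
      filter_upwards [step1] with x hx
      have h2 := (hx.trans (step2 x))
      calc (‖(T u : α → ℂ) x‖₊ : ℝ≥0∞) ^ (2:ℝ)
          ≤ (M ^ (1/2:ℝ) * (∫⁻ y, W x y * NU y ^ (2:ℝ) ∂μ) ^ (1/2:ℝ)) ^ (2:ℝ) :=
            ENNReal.rpow_le_rpow h2 (by norm_num)
        _ = M * ∫⁻ y, W x y * NU y ^ (2:ℝ) ∂μ := by
            rw [ENNReal.mul_rpow_of_nonneg _ _ (by norm_num : (0:ℝ) ≤ 2),
              ← ENNReal.rpow_mul, ← ENNReal.rpow_mul]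
            norm_num
    calc ∫⁻ x, (‖(T u : α → ℂ) x‖₊ : ℝ≥0∞) ^ (2:ℝ) ∂μ
        ≤ ∫⁻ x, M * ∫⁻ y, W x y * NU y ^ (2:ℝ) ∂μ ∂μ := lintegral_mono_ae hsq
      _ = M * ∫⁻ x, ∫⁻ y, W x y * NU y ^ (2:ℝ) ∂μ ∂μ := lintegral_const_mul' _ _ hM
      _ = M * ∫⁻ y, ∫⁻ x, W x y * NU y ^ (2:ℝ) ∂μ ∂μ := by
          rw [lintegral_lintegral_swap]
          exact (hW.aemeasurable.mul
            ((hUm.comp_quasiMeasurePreserving Measure.quasiMeasurePreserving_snd).pow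
              aemeasurable_const))
      _ = M * ∫⁻ y, (∫⁻ x, W x y ∂μ) * NU y ^ (2:ℝ) ∂μ := by
          congr 1
          refine lintegral_congr fun y => ?_
          rw [lintegral_mul_const' _ _ (by
            exact ENNReal.rpow_ne_top_of_nonneg (by norm_num) ENNReal.coe_ne_top)]
      _ = M ^ (2:ℝ) * ∫⁻ y, NU y ^ (2:ℝ) ∂μ := by
          simp_rw [hcol]
          rw [lintegral_const_mul' _ _ hM, ← mul_assoc]
          congr 1
          rw [show (2:ℝ) = ((2:ℕ):ℝ) by norm_num, ENNReal.rpow_natCast]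
          ring
  -- step 4 : conclude via the L² norms
  have hTu : ‖T u‖ = (eLpNorm (T u : α → ℂ) 2 μ).toReal := Lp.norm_def _
  have hu : ‖u‖ = (eLpNorm (u : α → ℂ) 2 μ).toReal := Lp.norm_def _
  have he : ∀ f : Lp ℂ 2 μ, eLpNorm (f : α → ℂ) 2 μ =
      (∫⁻ x, (‖(f : α → ℂ) x‖₊ : ℝ≥0∞) ^ (2:ℝ) ∂μ) ^ (1/2 : ℝ) := by
    intro f
    rw [eLpNorm_eq_lintegral_rpow_enorm_toReal (by norm_num) (by norm_num)]
    norm_num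
    rfl
  have hfin : M * eLpNorm (u : α → ℂ) 2 μ ≠ ∞ :=
    ENNReal.mul_ne_top hM (Lp.eLpNorm_ne_top u)
  have hle : eLpNorm (T u : α → ℂ) 2 μ ≤ M * eLpNorm (u : α → ℂ) 2 μ := by
    rw [he (T u), he u]
    calc (∫⁻ x, (‖(T u : α → ℂ) x‖₊ : ℝ≥0∞) ^ (2:ℝ) ∂μ) ^ (1/2 : ℝ)
        ≤ (M ^ (2:ℝ) * ∫⁻ y, NU y ^ (2:ℝ) ∂μ) ^ (1/2 : ℝ) :=
          ENNReal.rpow_le_rpow step3 (by norm_num)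
      _ = M * (∫⁻ y, NU y ^ (2:ℝ) ∂μ) ^ (1/2 : ℝ) := by
          rw [ENNReal.mul_rpow_of_nonneg _ _ (by norm_num : (0:ℝ) ≤ 1/2), ← ENNReal.rpow_mul]
          norm_num
  calc ‖T u‖ = (eLpNorm (T u : α → ℂ) 2 μ).toReal := hTu
    _ ≤ (M * eLpNorm (u : α → ℂ) 2 μ).toReal := ENNReal.toReal_mono hfin hle
    _ = M.toReal * ‖u‖ := by rw [ENNReal.toReal_mul, hu]

lemma ae_sub_prod {d : ℕ} {Q : Euc d → Prop}
    (hQ : ∀ᵐ z ∂(volume : Measure (Euc d)), Q z) (s t : Set (Euc d)) :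
    ∀ᵐ p : Euc d × Euc d ∂((volume.restrict s).prod (volume.restrict t)), Q (p.1 - p.2) := by
  obtain ⟨N, hNsub, hNmeas, hNnull⟩ := exists_measurable_superset_of_null (ae_iff.mp hQ)
  have hφ : MeasurePreserving (fun p : Euc d × Euc d => (p.1 - p.2, p.2))
      ((volume : Measure (Euc d)).prod volume) ((volume : Measure (Euc d)).prod volume) :=
    measurePreserving_sub_prod volume volume
  have hset : {p : Euc d × Euc d | p.1 - p.2 ∈ N} =
      (fun p : Euc d × Euc d => (p.1 - p.2, p.2)) ⁻¹' (N ×ˢ Set.univ) := by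
    ext p; simp
  have key : ((volume : Measure (Euc d)).prod volume) {p : Euc d × Euc d | p.1 - p.2 ∈ N} = 0 := by
    rw [hset, hφ.measure_preimage (hNmeas.prod MeasurableSet.univ).nullMeasurableSet,
      Measure.prod_prod, hNnull, zero_mul]
  rw [ae_iff]
  have hsub : {p : Euc d × Euc d | ¬ Q (p.1 - p.2)} ⊆ {p : Euc d × Euc d | p.1 - p.2 ∈ N} :=
    fun p hp => hNsub hp
  have hle : ((volume.restrict s).prod (volume.restrict t)) {p : Euc d × Euc d | p.1 - p.2 ∈ N}
      ≤ ((volume : Measure (Euc d)).prod volume) {p : Euc d × Euc d | p.1 - p.2 ∈ N} := by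
    rw [Measure.prod_restrict]
    exact Measure.le_iff'.mp Measure.restrict_le_self _
  exact measure_mono_null hsub (le_antisymm (hle.trans key.le) zero_le)

lemma intVec_add {d : ℕ} (m n : Fin d → ℤ) : intVec (d := d) (m + n) = intVec m + intVec n := by
  ext i; simp [intVec_apply]

set_option maxHeartbeats 2000000 in
/-- Lipschitz bound for the fiber operators: the integral operator on `L²(Ω;ℂ)` with kernel
`(ã(η, x-y) - ã(ξ, x-y)) μ(x,y)` has operator norm at most `μ₊ 2^d M₁(a) |ξ - η|`;
equivalently `‖𝔸(ξ) - 𝔸(η)‖ ≤ μ₊ 2^d M₁(a) |ξ - η|`. -/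
theorem stmt13 {d : ℕ} (hd : 1 ≤ d)
    (a : Euc d → ℝ) (μf : Euc d → Euc d → ℝ) (μm μp : ℝ)
    (ha_int : Integrable a)
    (ha_nn : ∀ᵐ x : Euc d, 0 ≤ a x)
    (ha_even : ∀ x : Euc d, a (-x) = a x)
    (hμ_meas : Measurable (Function.uncurry μf))
    (hμ_symm : ∀ x y : Euc d, μf x y = μf y x)
    (hμ_per : ∀ (x y : Euc d) (m n : Fin d → ℤ), μf (x + intVec m) (y + intVec n) = μf x y)
    (hμm : 0 < μm)
    (hμ_bdd : ∀ᵐ p : Euc d × Euc d, μm ≤ μf p.1 p.2 ∧ μf p.1 p.2 ≤ μp)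
    (hM1 : Integrable fun x : Euc d => ‖x‖ * a x)
    (ξ η : Euc d)
    (T : Lp ℂ 2 (volume.restrict (cube d)) →L[ℂ] Lp ℂ 2 (volume.restrict (cube d)))
    (hT : ∀ u : Lp ℂ 2 (volume.restrict (cube d)), ∀ᵐ x ∂volume.restrict (cube d),
        T u x = ∫ y in cube d, (atil a η (x - y) - atil a ξ (x - y)) * ((μf x y : ℝ) : ℂ) * u y) :
    ‖T‖ ≤ μp * 2 ^ d * (∫ z : Euc d, ‖z‖ * a z) * ‖ξ - η‖ := by
  classical
  -- measurable nonnegative version of `a`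
  set b : Euc d → ℝ := fun z => max (ha_int.1.mk a z) 0 with hbdef
  have hbmeas : Measurable b :=
    (ha_int.1.stronglyMeasurable_mk.measurable).max measurable_const
  have hbnn : ∀ z, 0 ≤ b z := fun z => le_max_right _ _
  have hab : a =ᵐ[(volume : Measure (Euc d))] b := by
    filter_upwards [ha_int.1.ae_eq_mk, ha_nn] with z h1 h2
    have : b z = max (ha_int.1.mk a z) 0 := rfl
    rw [this, ← h1, max_eq_left h2]
  -- basic objects
  set f₀ : Euc d → ℝ≥0∞ := fun z => ENNReal.ofReal (‖z‖ * b z) with hf₀def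
  have hf₀meas : Measurable f₀ := (measurable_norm.mul hbmeas).ennreal_ofReal
  set G : Euc d → ℝ≥0∞ := fun z => ∑' n : Fin d → ℤ, f₀ (z + intVec n) with hGdef
  have hGmeas : Measurable G :=
    Measurable.ennreal_tsum fun n => hf₀meas.comp (measurable_add_const _)
  set Mℒ : ℝ≥0∞ := ∫⁻ z, f₀ z with hMLdef
  set M₁ : ℝ := ∫ z : Euc d, ‖z‖ * a z with hM₁def
  have hM₁nnae : 0 ≤ᵐ[(volume : Measure (Euc d))] fun z : Euc d => ‖z‖ * a z :=
    ha_nn.mono fun z h => mul_nonneg (norm_nonneg _) h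
  have hM₁nn : 0 ≤ M₁ := integral_nonneg_of_ae hM₁nnae
  have hMeq : Mℒ = ENNReal.ofReal M₁ := by
    have h1 : Mℒ = ∫⁻ z, ENNReal.ofReal (‖z‖ * a z) := by
      rw [hMLdef]
      refine lintegral_congr_ae (hab.mono fun z h => ?_)
      rw [hf₀def]
      simp only
      rw [h]
    rw [h1, hM₁def, ofReal_integral_eq_lintegral_ofReal hM1 hM₁nnae]
  -- positivity of μp
  have hvol_ne : (volume : Measure (Euc d × Euc d)) ≠ 0 := by
    intro h
    have h1 : (volume : Measure (Euc d × Euc d)) Set.univ = 0 := by rw [h]; simp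
    rw [Measure.volume_eq_prod, ← Set.univ_prod_univ, Measure.prod_prod] at h1
    have h2 : (volume : Measure (Euc d)) Set.univ ≠ 0 :=
      isOpen_univ.measure_ne_zero volume ⟨0, trivial⟩
    rw [mul_eq_zero] at h1
    tauto
  haveI : (ae (volume : Measure (Euc d × Euc d))).NeBot := ae_neBot.mpr hvol_ne
  obtain ⟨q, hq1, hq2⟩ := hμ_bdd.exists
  have hμp0 : 0 ≤ μp := le_trans hμm.le (hq1.trans hq2)
  -- summability a.e.
  have hFae : ∀ᵐ z ∂(volume : Measure (Euc d)),
      (Summable fun n : Fin d → ℤ => b (z + intVec n)) ∧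
      (Summable fun n : Fin d → ℤ => ‖z + intVec n‖ * b (z + intVec n)) := by
    set F : Euc d → ℝ≥0∞ :=
      fun z => ∑' n : Fin d → ℤ, ENNReal.ofReal ((1 + ‖z + intVec n‖) * b (z + intVec n))
      with hFdef
    have hgm : Measurable fun z : Euc d => ENNReal.ofReal ((1 + ‖z‖) * b z) :=
      ((measurable_const.add measurable_norm).mul hbmeas).ennreal_ofReal
    have hFmeas : Measurable F :=
      Measurable.ennreal_tsum fun n => hgm.comp (measurable_add_const _)
    have hFcube : ∫⁻ z in cube d, F z = ∫⁻ z, ENNReal.ofReal ((1 + ‖z‖) * b z) :=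
      lintegral_tiled measurableSet_cube cube_uniq hgm
    have hfin : ∫⁻ z, ENNReal.ofReal ((1 + ‖z‖) * b z) < ∞ := by
      have hsplit : ∀ z : Euc d, ENNReal.ofReal ((1 + ‖z‖) * b z)
          = ENNReal.ofReal (b z) + ENNReal.ofReal (‖z‖ * b z) := by
        intro z
        rw [← ENNReal.ofReal_add (hbnn z) (mul_nonneg (norm_nonneg _) (hbnn z))]
        ring_nf
      simp_rw [hsplit]
      rw [lintegral_add_left hbmeas.ennreal_ofReal]
      have h1 : ∫⁻ z, ENNReal.ofReal (b z) < ∞ := (ha_int.congr hab).lintegral_lt_top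
      have h2 : ∫⁻ z, ENNReal.ofReal (‖z‖ * b z) < ∞ := by
        have hbint : Integrable (fun z : Euc d => ‖z‖ * b z) :=
          hM1.congr (hab.mono fun z h => by dsimp only; rw [h])
        exact hbint.lintegral_lt_top
      exact ENNReal.add_lt_top.mpr ⟨h1, h2⟩
    have hAnull : volume {z : Euc d | F z = ∞} = 0 := by
      apply null_of_periodic (hFmeas (measurableSet_singleton ∞))
      · intro z n
        have hFz : F (z + intVec n) = F z := by
          rw [hFdef]
          simp only
          have hterm : ∀ k : Fin d → ℤ, z + intVec n + intVec k = z + intVec (n + k) := by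
            intro k; rw [intVec_add]; abel
          calc ∑' k : Fin d → ℤ,
                ENNReal.ofReal ((1 + ‖z + intVec n + intVec k‖) * b (z + intVec n + intVec k))
              = ∑' k : Fin d → ℤ,
                ENNReal.ofReal ((1 + ‖z + intVec (n + k)‖) * b (z + intVec (n + k))) := by
                congr 1; funext k; rw [hterm k]
            _ = ∑' k : Fin d → ℤ,
                ENNReal.ofReal ((1 + ‖z + intVec k‖) * b (z + intVec k)) :=
                (Equiv.addLeft n).tsum_eq
                  (fun m => ENNReal.ofReal ((1 + ‖z + intVec m‖) * b (z + intVec m)))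
        show F (z + intVec n) ∈ ({∞} : Set ℝ≥0∞) ↔ F z ∈ ({∞} : Set ℝ≥0∞)
        simp only [Set.mem_singleton_iff, hFz]
      · have hae : ∀ᵐ z ∂volume.restrict (cube d), F z < ∞ :=
          ae_lt_top hFmeas (by rw [hFcube]; exact hfin.ne)
        have h0 := ae_iff.mp hae
        have hsets : {z : Euc d | ¬ F z < ∞} = F ⁻¹' {∞} := by
          ext z; simp [lt_top_iff_ne_top]
        rw [hsets, Measure.restrict_apply (hFmeas (measurableSet_singleton ∞))] at h0
        exact h0
    have hFne : ∀ᵐ z ∂(volume : Measure (Euc d)), F z ≠ ∞ := by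
      rw [ae_iff]
      convert hAnull using 2
      ext z; simp
    filter_upwards [hFne] with z hz
    have hsum : Summable fun n : Fin d → ℤ => (1 + ‖z + intVec n‖) * b (z + intVec n) := by
      have h1 := ENNReal.summable_toReal hz
      have h2 : ∀ n : Fin d → ℤ,
          (ENNReal.ofReal ((1 + ‖z + intVec n‖) * b (z + intVec n))).toReal
            = (1 + ‖z + intVec n‖) * b (z + intVec n) := by
        intro n
        exact ENNReal.toReal_ofReal
          (mul_nonneg (by positivity) (hbnn _))
      simpa only [h2] using h1
    constructor
    · refine Summable.of_nonneg_of_le (fun n => hbnn _) (fun n => ?_) hsum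
      nlinarith [hbnn (z + intVec n), norm_nonneg (z + intVec n)]
    · refine Summable.of_nonneg_of_le
        (fun n => mul_nonneg (norm_nonneg _) (hbnn _)) (fun n => ?_) hsum
      nlinarith [hbnn (z + intVec n), norm_nonneg (z + intVec n)]
  -- a agrees with b along all lattice translates, a.e.
  have habs : ∀ᵐ z ∂(volume : Measure (Euc d)),
      ∀ n : Fin d → ℤ, a (z + intVec n) = b (z + intVec n) := by
    rw [ae_all_iff]
    intro n
    have := hab.comp_tendsto
      (measurePreserving_add_right volume (intVec n)).quasiMeasurePreserving.tendsto_ae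
    exact this.mono fun z h => h
  -- the pointwise kernel bound, a.e. in z
  have hQae : ∀ᵐ z ∂(volume : Measure (Euc d)),
      (‖atil a η z - atil a ξ z‖₊ : ℝ≥0∞) ≤ ENNReal.ofReal ‖ξ - η‖ * G z := by
    filter_upwards [habs, hFae] with z hz hzs
    have hatil : ∀ ζ : Euc d, atil a ζ z = atil b ζ z := by
      intro ζ; rw [atil, atil]; congr 1; funext n; rw [hz n]
    have hbd := atil_diff_bound b ξ η z (fun n => hbnn _) hzs.1 hzs.2
    rw [← enorm_eq_nnnorm, ← ofReal_norm, hatil ξ, hatil η]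
    have hGz : G z = ENNReal.ofReal (∑' n : Fin d → ℤ, ‖z + intVec n‖ * b (z + intVec n)) := by
      rw [hGdef]
      simp only
      rw [ENNReal.ofReal_tsum_of_nonneg (fun n => mul_nonneg (norm_nonneg _) (hbnn _)) hzs.2]
    rw [hGz, ← ENNReal.ofReal_mul (norm_nonneg _)]
    exact ENNReal.ofReal_le_ofReal hbd
  -- kernel bound on the product
  have hKW : ∀ᵐ p : Euc d × Euc d
      ∂((volume.restrict (cube d)).prod (volume.restrict (cube d))),
      (‖(atil a η (p.1 - p.2) - atil a ξ (p.1 - p.2)) * ((μf p.1 p.2 : ℝ) : ℂ)‖₊ : ℝ≥0∞)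
        ≤ ENNReal.ofReal μp * (ENNReal.ofReal ‖ξ - η‖ * G (p.1 - p.2)) := by
    have hμres : ∀ᵐ p : Euc d × Euc d
        ∂((volume.restrict (cube d)).prod (volume.restrict (cube d))),
        μm ≤ μf p.1 p.2 ∧ μf p.1 p.2 ≤ μp := by
      rw [Measure.prod_restrict]
      refine ae_restrict_of_ae ?_
      rw [← Measure.volume_eq_prod]
      exact hμ_bdd
    filter_upwards [ae_sub_prod hQae (cube d) (cube d), hμres] with p h1 h2
    rw [nnnorm_mul, ENNReal.coe_mul]
    have hμb : (‖((μf p.1 p.2 : ℝ) : ℂ)‖₊ : ℝ≥0∞) ≤ ENNReal.ofReal μp := by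
      rw [Complex.nnnorm_real, ← enorm_eq_nnnorm, Real.enorm_eq_ofReal (le_trans hμm.le h2.1)]
      exact ENNReal.ofReal_le_ofReal h2.2
    calc (‖atil a η (p.1 - p.2) - atil a ξ (p.1 - p.2)‖₊ : ℝ≥0∞) * ‖((μf p.1 p.2 : ℝ) : ℂ)‖₊
        ≤ (ENNReal.ofReal ‖ξ - η‖ * G (p.1 - p.2)) * ENNReal.ofReal μp := mul_le_mul' h1 hμb
      _ = ENNReal.ofReal μp * (ENNReal.ofReal ‖ξ - η‖ * G (p.1 - p.2)) := by ring
  -- the row and column integrals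
  have hrow : ∀ x : Euc d, ∫⁻ y, ENNReal.ofReal μp * (ENNReal.ofReal ‖ξ - η‖ * G (x - y))
      ∂(volume.restrict (cube d)) = ENNReal.ofReal μp * (ENNReal.ofReal ‖ξ - η‖ * Mℒ) := by
    intro x
    rw [lintegral_const_mul' _ _ ENNReal.ofReal_ne_top,
      lintegral_const_mul' _ _ ENNReal.ofReal_ne_top]
    have : ∫⁻ y, G (x - y) ∂(volume.restrict (cube d)) = Mℒ := by
      rw [hGdef, hMLdef]
      exact row_integral hf₀meas x
    rw [this]
  have hcol : ∀ y : Euc d, ∫⁻ x, ENNReal.ofReal μp * (ENNReal.ofReal ‖ξ - η‖ * G (x - y))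
      ∂(volume.restrict (cube d)) = ENNReal.ofReal μp * (ENNReal.ofReal ‖ξ - η‖ * Mℒ) := by
    intro y
    rw [lintegral_const_mul' _ _ ENNReal.ofReal_ne_top,
      lintegral_const_mul' _ _ ENNReal.ofReal_ne_top]
    have : ∫⁻ x, G (x - y) ∂(volume.restrict (cube d)) = Mℒ := by
      rw [hGdef, hMLdef]
      exact col_integral hf₀meas y
    rw [this]
  have hMne : ENNReal.ofReal μp * (ENNReal.ofReal ‖ξ - η‖ * Mℒ) ≠ ∞ := by
    rw [hMeq]
    exact ENNReal.mul_ne_top ENNReal.ofReal_ne_top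
      (ENNReal.mul_ne_top ENNReal.ofReal_ne_top ENNReal.ofReal_ne_top)
  have hWmeas : Measurable (Function.uncurry
      fun x y : Euc d => ENNReal.ofReal μp * (ENNReal.ofReal ‖ξ - η‖ * G (x - y))) := by
    have : Function.uncurry
        (fun x y : Euc d => ENNReal.ofReal μp * (ENNReal.ofReal ‖ξ - η‖ * G (x - y)))
        = fun p : Euc d × Euc d =>
          ENNReal.ofReal μp * (ENNReal.ofReal ‖ξ - η‖ * G (p.1 - p.2)) := rfl
    rw [this]
    exact measurable_const.mul
      (measurable_const.mul (hGmeas.comp (measurable_fst.sub measurable_snd)))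
  -- apply the Schur bound
  have hfinal := schur_bound
    (fun x y : Euc d => (atil a η (x - y) - atil a ξ (x - y)) * ((μf x y : ℝ) : ℂ))
    (fun x y : Euc d => ENNReal.ofReal μp * (ENNReal.ofReal ‖ξ - η‖ * G (x - y)))
    (ENNReal.ofReal μp * (ENNReal.ofReal ‖ξ - η‖ * Mℒ)) hWmeas hMne hKW hrow hcol T hT
  refine hfinal.trans ?_
  rw [hMeq, ENNReal.toReal_mul, ENNReal.toReal_mul, ENNReal.toReal_ofReal hμp0,
    ENNReal.toReal_ofReal (norm_nonneg _), ENNReal.toReal_ofReal hM₁nn]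
  have h2d : (1:ℝ) ≤ 2 ^ d := one_le_pow₀ (by norm_num)
  have hc : 0 ≤ μp * M₁ * ‖ξ - η‖ :=
    mul_nonneg (mul_nonneg hμp0 hM₁nn) (norm_nonneg _)
  calc μp * (‖ξ - η‖ * M₁) = (μp * M₁ * ‖ξ - η‖) * 1 := by ring
    _ ≤ (μp * M₁ * ‖ξ - η‖) * 2 ^ d := mul_le_mul_of_nonneg_left h2d hc
    _ = μp * 2 ^ d * M₁ * ‖ξ - η‖ := by ring
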